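/- Assume conditions (B), (vi) and (F1) hold, that L_{−q} is an irreducible L_0-module with [L_0, L_{−q}] = L_{−q}, and that r ≥ q. Then [L_{−q+i}, L_{−i}] = L_{−q} for every integer i with 0 ≤ i ≤ q. (Lemma 2.17.) -/
import Mathlib


/- Graded Lie algebra setting: `F` a field of characteristic 3, `A` a
finite-dimensional Lie algebra over `F`, with a `ℤ`-grading `L : ℤ → Submodule F A`. -/

namespace GradedLie

variable {F A : Type*} [Field F] [CharP F 3] [LieRing A] [LieAlgebra F A]

/-- The linear span of all brackets `⁅u, v⁆` with `u ∈ U`, `v ∈ V`. -/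
def bSpan (U V : Submodule F A) : Submodule F A :=
  Submodule.span F {z | ∃ u ∈ U, ∃ v ∈ V, z = ⁅u, v⁆}

/-- `M` is an irreducible `L0`-module under the adjoint action:
`M ≠ 0` and the only `L0`-submodules of `M` are `0` and `M`. -/
def IsIrred (L0 M : Submodule F A) : Prop :=
  M ≠ ⊥ ∧ ∀ V ≤ M, bSpan L0 V ≤ V → V = ⊥ ∨ V = M

private lemma mem_bSpan' {U V : Submodule F A} {u v : A} (hu : u ∈ U) (hv : v ∈ V) :
    ⁅u, v⁆ ∈ bSpan U V :=
  Submodule.subset_span ⟨u, hu, v, hv, rfl⟩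

private lemma bSpan_le' {U V W : Submodule F A} (h : ∀ u ∈ U, ∀ v ∈ V, ⁅u, v⁆ ∈ W) :
    bSpan U V ≤ W := by
  rw [bSpan, Submodule.span_le]
  rintro z ⟨u, hu, v, hv, rfl⟩
  exact h u hu v hv

private lemma lie_mem_of_forall {u : A} {W : Submodule F A} {S : Set A}
    (h : ∀ z ∈ S, ⁅u, z⁆ ∈ W) :
    ∀ z ∈ Submodule.span F S, ⁅u, z⁆ ∈ W := by
  intro z hz
  induction hz using Submodule.span_induction with
  | mem z hz => exact h z hz
  | zero => simpa using W.zero_mem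
  | add a b _ _ ha hb => rw [lie_add]; exact W.add_mem ha hb
  | smul c a _ ha => rw [lie_smul]; exact W.smul_mem c ha

private lemma lie_mem_bSpan_elim {u : A} {U V W : Submodule F A}
    (h : ∀ a ∈ U, ∀ b ∈ V, ⁅u, ⁅a, b⁆⁆ ∈ W) : ∀ z ∈ bSpan U V, ⁅u, z⁆ ∈ W := by
  refine lie_mem_of_forall ?_
  rintro z ⟨a, ha, b, hb, rfl⟩
  exact h a ha b hb

private lemma bSpan_comm' (U V : Submodule F A) : bSpan U V = bSpan V U := by
  have key : ∀ U V : Submodule F A, bSpan U V ≤ bSpan V U := by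
    intro U V
    refine bSpan_le' fun u hu v hv => ?_
    rw [← lie_skew]
    exact neg_mem (mem_bSpan' hv hu)
  exact le_antisymm (key U V) (key V U)

/-- iterated bracketing by `L 1` starting from `L (-i)` -/
private def Wit (L : ℤ → Submodule F A) (i : ℤ) : ℕ → Submodule F A
  | 0 => L (-i)
  | (m + 1) => bSpan (L 1) (Wit L i m)

/-- Lemma 2.17: under (B), (vi), (F1), irreducibility of `L (-q)` with
`[L 0, L (-q)] = L (-q)`, and `r ≥ q`, we have `[L (-q+i), L (-i)] = L (-q)`
for `0 ≤ i ≤ q`. -/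
theorem lemma_2_17
    [FiniteDimensional F A]
    (L : ℤ → Submodule F A)
    (hdecomp : DirectSum.IsInternal L)
    (hgrade : ∀ i j : ℤ, ∀ x ∈ L i, ∀ y ∈ L j, ⁅x, y⁆ ∈ L (i + j))
    (q r : ℤ) (hq : 1 ≤ q) (hr : 1 ≤ r)
    (hbound : ∀ i : ℤ, i < -q ∨ r < i → L i = ⊥)
    (hbot : L (-q) ≠ ⊥)
    (hB : IsIrred (L 0) (L (-1)))
    (hvi : ∀ i : ℤ, 0 ≤ i → ∀ x ∈ L (-i), x ≠ 0 → ∃ y ∈ L 1, ⁅y, x⁆ ≠ 0)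
    (hF1 : ∀ i : ℤ, -q < i → ∀ x ∈ L i, x ≠ 0 → ∃ y ∈ L (-1), ⁅y, x⁆ ≠ 0)
    (hirr : IsIrred (L 0) (L (-q)))
    (hact : bSpan (L 0) (L (-q)) = L (-q))
    (hrq : q ≤ r) :
    ∀ i : ℤ, 0 ≤ i → i ≤ q → bSpan (L (-q + i)) (L (-i)) = L (-q) := by
  intro i hi0 hiq
  have hLc : ∀ {a b : ℤ}, a = b → ∀ {z : A}, z ∈ L a → z ∈ L b := by
    rintro a b rfl z hz; exact hz
  have hgr : ∀ i' j k : ℤ, i' + j = k → bSpan (L i') (L j) ≤ L k := fun i' j k hk =>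
    bSpan_le' fun u hu v hv => hLc hk (hgrade i' j u hu v hv)
  rcases hi0.lt_or_eq with hi1 | h0
  swap
  · -- case i = 0
    subst h0
    have h1 : (-q + (0:ℤ)) = -q := by ring
    have h2 : (-(0:ℤ)) = 0 := by ring
    rw [h1, h2, bSpan_comm']
    exact hact
  -- now 0 < i
  -- nonzero elements in each L (-j), 0 ≤ j ≤ q
  obtain ⟨x0, hx0m, hx0⟩ := (Submodule.ne_bot_iff _).1 hbot
  have hnzN : ∀ n : ℕ, (n : ℤ) ≤ q → ∃ z, z ∈ L ((n : ℤ) - q) ∧ z ≠ 0 := by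
    intro n
    induction n with
    | zero => intro _; exact ⟨x0, hLc (by push_cast; ring) hx0m, hx0⟩
    | succ n ih =>
      intro hn
      obtain ⟨z, hzm, hz0⟩ := ih (by push_cast at hn ⊢; omega)
      obtain ⟨y, hy, hyz⟩ := hvi (q - n) (by push_cast at hn; omega) z
        (hLc (by push_cast; ring) hzm) hz0
      exact ⟨⁅y, z⁆, hLc (by push_cast; ring) (hgrade 1 ((n:ℤ) - q) y hy z hzm), hyz⟩
  have hnzZ : ∀ j : ℤ, 0 ≤ j → j ≤ q → ∃ z, z ∈ L (-j) ∧ z ≠ 0 := by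
    intro j h0j hjq
    obtain ⟨z, hz, hz0⟩ := hnzN (q - j).toNat (by omega)
    exact ⟨z, hLc (by omega) hz, hz0⟩
  -- the chain W
  have hWle : ∀ m : ℕ, Wit L i m ≤ L ((m : ℤ) - i) := by
    intro m
    induction m with
    | zero =>
      exact le_of_eq (congrArg L (by push_cast; ring))
    | succ m ih =>
      refine bSpan_le' fun u hu v hv =>
        hLc (by push_cast; ring) (hgrade 1 ((m:ℤ) - i) u hu v (ih hv))
  have hWstab : ∀ m : ℕ, bSpan (L 0) (Wit L i m) ≤ Wit L i m := by
    intro m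
    induction m with
    | zero => exact hgr 0 (-i) (-i) (by ring)
    | succ m ih =>
      refine bSpan_le' fun u hu z hz => ?_
      refine lie_mem_bSpan_elim (fun a ha b hb => ?_) z hz
      rw [leibniz_lie]
      exact add_mem (mem_bSpan' (hLc (zero_add 1) (hgrade 0 1 u hu a ha)) hb)
        (mem_bSpan' ha (ih (mem_bSpan' hu hb)))
  have hWnz : ∀ m : ℕ, (m : ℤ) ≤ i → ∃ z, z ∈ Wit L i m ∧ z ≠ 0 := by
    intro m
    induction m with
    | zero =>
      intro _
      obtain ⟨z, hz, hz0⟩ := hnzZ i hi0 hiq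
      exact ⟨z, hz, hz0⟩
    | succ m ih =>
      intro hm
      obtain ⟨z, hz, hz0⟩ := ih (by push_cast at hm; omega)
      obtain ⟨y, hy, hyz⟩ := hvi (i - m) (by push_cast at hm; omega) z
        (hLc (by push_cast; ring) (hWle m hz)) hz0
      exact ⟨⁅y, z⁆, mem_bSpan' hy hz, hyz⟩
  -- the candidate submodule
  have hVle : bSpan (L (-q + i)) (L (-i)) ≤ L (-q) := hgr _ _ _ (by ring)
  have hVstab : bSpan (L 0) (bSpan (L (-q + i)) (L (-i))) ≤ bSpan (L (-q + i)) (L (-i)) := by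
    refine bSpan_le' fun u hu z hz => ?_
    refine lie_mem_bSpan_elim (fun a ha b hb => ?_) z hz
    rw [leibniz_lie]
    exact add_mem (mem_bSpan' (hLc (zero_add _) (hgrade 0 _ u hu a ha)) hb)
      (mem_bSpan' ha (hLc (zero_add _) (hgrade 0 _ u hu b hb)))
  rcases hirr.2 _ hVle hVstab with hV0 | hV
  swap
  · exact hV
  exfalso
  -- the descent
  have hdesc : ∀ m : ℕ, (m : ℤ) ≤ i - 1 →
      ∀ b ∈ L (-q + i - m), ∀ w ∈ Wit L i m, ⁅b, w⁆ = 0 := by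
    intro m
    induction m with
    | zero =>
      intro _ b hb w hw
      have hmem : ⁅b, w⁆ ∈ bSpan (L (-q + i)) (L (-i)) :=
        mem_bSpan' (hLc (by push_cast; ring) hb) hw
      rw [hV0] at hmem
      simpa using hmem
    | succ m ih =>
      intro hm b hb w hw
      have hm' : (m : ℤ) ≤ i - 1 := by push_cast at hm; omega
      have hmem : ⁅b, w⁆ ∈ (⊥ : Submodule F A) := by
        refine lie_mem_bSpan_elim (fun y hy v hv => ?_) w hw
        have h1 : ⁅b, v⁆ = 0 := by
          have hm2 : ⁅b, v⁆ ∈ L (-q - 1) :=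
            hLc (by push_cast; ring)
              (hgrade (-q + i - ((m:ℕ)+1:ℕ)) ((m:ℤ) - i) b hb v (hWle m hv))
          rw [hbound (-q - 1) (Or.inl (by omega))] at hm2
          simpa using hm2
        have h2 : ⁅⁅b, y⁆, v⁆ = 0 :=
          ih hm' ⁅b, y⁆ (hLc (by push_cast; ring) (hgrade _ 1 b hb y hy)) v hv
        rw [leibniz_lie, h1, h2, lie_zero, add_zero]
        exact Submodule.zero_mem ⊥
      simpa using hmem
  -- W (i-1) = L (-1)
  set n₁ : ℕ := (i - 1).toNat with hn₁def
  have hn₁ : (n₁ : ℤ) = i - 1 := by omega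
  have hWn₁le : Wit L i n₁ ≤ L (-1) :=
    le_trans (hWle n₁) (le_of_eq (congrArg L (by omega)))
  have hWn₁ne : Wit L i n₁ ≠ ⊥ := by
    obtain ⟨z, hz, hz0⟩ := hWnz n₁ (by omega)
    intro h
    rw [h] at hz
    exact hz0 (by simpa using hz)
  have hWn₁ : Wit L i n₁ = L (-1) := by
    rcases hB.2 _ hWn₁le (hWstab n₁) with h | h
    · exact absurd h hWn₁ne
    · exact h
  -- contradiction via (F1)
  obtain ⟨z, hz, hz0⟩ := hnzZ (q - 1) (by omega) (by omega)
  obtain ⟨y, hy, hyz⟩ := hF1 (-q + 1) (by omega) z (hLc (by ring) hz) hz0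
  have hzy : ⁅z, y⁆ = 0 := by
    refine hdesc n₁ (by omega) z (hLc (by omega) hz) y ?_
    rw [hWn₁]; exact hy
  apply hyz
  rw [← lie_skew, hzy, neg_zero]
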